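/- The function φ is jointly convex in (m,ψ): for all m,m′∈[0,∞)^ℕ, all probability measures ψ,ψ′ on ℕ_0, and all λ∈[0,1], one has φ(λm+(1−λ)m′, λψ+(1−λ)ψ′) ≤ λ·φ(m,ψ) + (1−λ)·φ(m′,ψ′). -/

import Mathlib

open MeasureTheory ProbabilityTheory Filter
open scoped ENNReal NNReal Classical

namespace BoxBose

/-- Sites of the lattice `ℤ^d`. -/
abbrev Site (d : ℕ) := Fin d → ℤ

/-- Configurations: `ω k x` is the number of points at site `x` carrying the mark `x + G k`. -/
abbrev Config (d : ℕ) := ℕ+ → Site d → ℕ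

/-- The centred box of radius `n` in `ℤ^d`, as a finite set of sites. -/
noncomputable def box (d n : ℕ) : Finset (Site d) :=
  Fintype.piFinset fun _ : Fin d => Finset.Icc (-(n : ℤ)) (n : ℤ)

/-- Restriction of a configuration to a finite set of sites. -/
def restrict {d : ℕ} (Λ : Finset (Site d)) (ω : Config d) : Config d :=
  fun k x => if x ∈ Λ then ω k x else 0

/-- Shift of a configuration by a lattice vector `z`. -/
def shift {d : ℕ} (z : Site d) (ω : Config d) : Config d := fun k x => ω k (x + z)

/-- Shift-invariant probability measures on the configuration space (the set `M₁ˢ(Ω)`). -/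
def IsShiftInvariantProb {d : ℕ} (P : Measure (Config d)) : Prop :=
  IsProbabilityMeasure P ∧ ∀ z : Site d, P.map (shift z) = P

/-- Relative entropy `H(μ|ν)` of two measures, given by the discrete formula
`H(μ|ν) = ∑ₓ [ν(x) − μ(x) + μ(x) log (μ(x)/ν(x))]` if `μ ≪ ν`, and `∞` otherwise. -/
noncomputable def Hrel {α : Type*} [MeasurableSpace α] (μ ν : Measure α) : ℝ≥0∞ :=
  if μ ≪ ν then
    ∑' x : α, ENNReal.ofReal
      ((ν {x}).toReal - (μ {x}).toReal
        + (μ {x}).toReal * Real.log ((μ {x}).toReal / (ν {x}).toReal))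
  else ⊤

/-- The entropy density `I(P)` of `P` relative to a reference measure `ν`: the limit, along
increasing centred boxes `Q ↑ ℤ^d`, of `|Q|⁻¹ H(P_Q | ν_Q)` (written as a `limsup`, which
coincides with the limit whenever the latter exists; the paper guarantees its existence). -/
noncomputable def entDens {d : ℕ} (ν P : Measure (Config d)) : ℝ≥0∞ :=
  Filter.limsup
    (fun n : ℕ =>
      Hrel (P.map (restrict (box d n))) (ν.map (restrict (box d n)))
        / ((box d n).card : ℝ≥0∞))
    Filter.atTop

/-- `μ` is the law of a field of independent Poisson random variables, with parameter `r k`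
for every coordinate `ξ⁽ᵏ⁾(x)`, `k ∈ ℕ`, `x ∈ ℤ^d`. -/
def IsPoissonField (d : ℕ) (r : ℕ+ → ℝ≥0) (μ : Measure (Config d)) : Prop :=
  IsProbabilityMeasure μ ∧
    iIndepFun
      (fun p : ℕ+ × Site d => fun ω : Config d => ω p.1 p.2) μ ∧
    ∀ (k : ℕ+) (x : Site d), μ.map (fun ω : Config d => ω k x) = poissonMeasure (r k)

/-- The data of the box version of the interacting Bose gas: deterministic box-like marks
`G k` of cardinality `k`, a nonnegative symmetric compactly supported pair potential `v`,
a summable sequence of positive intensities `q`, and a reference marked Poisson point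
process `ref` with intensities `q`. -/
structure Model (d : ℕ) where
  G : ℕ+ → Finset (Site d)
  hG : ∀ k : ℕ+, ∃ L : ℕ,
    (Fintype.piFinset fun _ : Fin d => Finset.Icc (-(L : ℤ)) (L : ℤ)) ⊆ G k ∧
    G k ⊆ (Fintype.piFinset fun _ : Fin d => Finset.Icc (-(L : ℤ) - 1) ((L : ℤ) + 1)) ∧
    (G k).card = (k : ℕ)
  v : Site d → ℝ
  hv_nonneg : ∀ i, 0 ≤ v i
  hv_symm : ∀ i, v i = v (-i)
  hv_fin : (Function.support v).Finite
  q : ℕ+ → ℝ≥0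
  hq_pos : ∀ k, 0 < q k
  hq_sum : Summable q
  ref : Measure (Config d)
  href : IsPoissonField d q ref

variable {d : ℕ}

/-- The pair interaction `T_{x,y}(G,G') = ∑_{i∈G} ∑_{j∈G'} v(x+i−y−j)`. -/
noncomputable def T (M : Model d) (x y : Site d) (A B : Finset (Site d)) : ℝ :=
  ∑ i ∈ A, ∑ j ∈ B, M.v (x + i - y - j)

/-- `v̄ = ∑_{i∈ℤ^d} v(i)`, as an extended nonnegative real. -/
noncomputable def vbar (M : Model d) : ℝ≥0∞ := ∑' i : Site d, ENNReal.ofReal (M.v i)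

/-- `v̄ = ∑_{i∈ℤ^d} v(i)`, as a real number. -/
noncomputable def vbarR (M : Model d) : ℝ := ∑' i : Site d, M.v i

/-- The energy `Φ_{0,ℤ^d}(ω)` between the origin and the whole lattice. -/
noncomputable def PhiZero (M : Model d) (ω : Config d) : ℝ≥0∞ :=
  ∑' (y : Site d) (k : ℕ+) (l : ℕ+),
    (ω k 0 : ℝ≥0∞) * (ω l y : ℝ≥0∞) * ENNReal.ofReal (T M 0 y (M.G k) (M.G l))

/-- The counting functional `N₀^{(δ_k)}(ω)`, the number of points at the origin with mark `G k`. -/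
noncomputable def Ndelta (k : ℕ+) (ω : Config d) : ℝ≥0∞ := (ω k 0 : ℝ≥0∞)

/-- The counting functional `N₀^{(ℓ)}(ω) = ∑_k k·N₀^{(δ_k)}(ω)`. -/
noncomputable def Nell (ω : Config d) : ℝ≥0∞ :=
  ∑' k : ℕ+, ((k : ℕ) : ℝ≥0∞) * (ω k 0 : ℝ≥0∞)

/-- Admissibility of a family `(P_a)_{a∈ℕ₀}` in the variational formula for `φ(m,ψ)`:
each `P_a` is a shift-invariant probability measure, and
`∑_a ψ(a) P_a(N₀^{(δ_k)}) = m_k` for every `k ∈ ℕ`. -/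
def phiAdmissible (M : Model d) (m : ℕ+ → ℝ≥0) (ψ : PMF ℕ) (P : ℕ → Measure (Config d)) : Prop :=
  (∀ a : ℕ, IsShiftInvariantProb (P a)) ∧
    ∀ k : ℕ+, (∑' a : ℕ, ψ a * ∫⁻ ω, Ndelta k ω ∂(P a)) = (m k : ℝ≥0∞)

/-- The functional minimised in the definition of `φ(m,ψ)`:
`∑_a ψ(a) [I(P_a) + P_a(Φ_{0,ℤ^d}) + 2v̄·a·P_a(N₀^{(ℓ)}) + v̄·a²]`. -/
noncomputable def phiObjective (M : Model d) (ψ : PMF ℕ) (P : ℕ → Measure (Config d)) : ℝ≥0∞ :=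
  ∑' a : ℕ, ψ a *
    (entDens M.ref (P a) + (∫⁻ ω, PhiZero M ω ∂(P a))
      + 2 * vbar M * (a : ℝ≥0∞) * (∫⁻ ω, Nell ω ∂(P a)) + vbar M * (a : ℝ≥0∞) ^ 2)

/-- The variational formula `φ(m,ψ)`. -/
noncomputable def phi (M : Model d) (m : ℕ+ → ℝ≥0) (ψ : PMF ℕ) : ℝ≥0∞ :=
  sInf { r | ∃ P : ℕ → Measure (Config d), phiAdmissible M m ψ P ∧ r = phiObjective M ψ P }

/-- The free-energy functional
`χ(ρ_mi,ρ_ma) = inf {φ(m,ψ) : ∑_k k·m_k = ρ_mi, ∑_a a·ψ(a) = ρ_ma}`. -/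
noncomputable def chi (M : Model d) (ρmi ρma : ℝ≥0∞) : ℝ≥0∞ :=
  sInf { r | ∃ (m : ℕ+ → ℝ≥0) (ψ : PMF ℕ),
    (∑' k : ℕ+, ((k : ℕ) : ℝ≥0∞) * (m k : ℝ≥0∞)) = ρmi ∧
    (∑' a : ℕ, (a : ℝ≥0∞) * ψ a) = ρma ∧ r = phi M m ψ }

/-- `χ(ρ) = χ(ρ,0)` as a real-valued function of a real density. -/
noncomputable def chiR (M : Model d) (ρ : ℝ) : ℝ := (chi M (ENNReal.ofReal ρ) 0).toReal

/-- The total particle density `∑_k k·m_k + ∑_a a·ψ(a)` of a pair `(m,ψ)`. -/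
noncomputable def massOf {d : ℕ} (m : ℕ+ → ℝ≥0) (ψ : PMF ℕ) : ℝ≥0∞ :=
  (∑' k : ℕ+, ((k : ℕ) : ℝ≥0∞) * (m k : ℝ≥0∞)) + ∑' a : ℕ, (a : ℝ≥0∞) * ψ a

/-- `(m,ψ)` is a minimiser of the constrained variational problem
`χ(ρ) = min {φ(m,ψ) : ∑_k k·m_k + ∑_a a·ψ(a) = ρ}` at density `ρ`. -/
def IsMinimiserAt (M : Model d) (m : ℕ+ → ℝ≥0) (ψ : PMF ℕ) (ρ : ℝ) : Prop :=
  massOf (d := d) m ψ = ENNReal.ofReal ρ ∧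
    ∀ (m' : ℕ+ → ℝ≥0) (ψ' : PMF ℕ),
      massOf (d := d) m' ψ' = ENNReal.ofReal ρ → phi M m ψ ≤ phi M m' ψ'

/-- The critical particle density
`ρ_c = sup {ρ ∈ (0,∞) : the constrained problem at density ρ has a minimiser (m, δ₀)}`. -/
noncomputable def rhoC (M : Model d) : ℝ≥0∞ :=
  sSup { x : ℝ≥0∞ | ∃ ρ : ℝ, 0 < ρ ∧ x = ENNReal.ofReal ρ ∧
    ∃ m : ℕ+ → ℝ≥0, IsMinimiserAt M m (PMF.pure 0) ρ }

/-- The assumption `q_k = e^{o(k)}` as `k → ∞`. -/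
def qSubexp (M : Model d) : Prop :=
  Filter.Tendsto (fun k : ℕ+ => Real.log (M.q k) / ((k : ℕ) : ℝ)) Filter.atTop (nhds 0)

/-- `e^{-x}` for `x ∈ [0,∞]`, with `e^{-∞} = 0`. -/
noncomputable def expNeg (x : ℝ≥0∞) : ℝ≥0∞ :=
  if x = ⊤ then 0 else ENNReal.ofReal (Real.exp (-x.toReal))

/-- The self-interaction `t_k = T_{0,0}(G_k,G_k)` of a `k`-mark. -/
noncomputable def tMark (M : Model d) (k : ℕ+) : ℝ := T M 0 0 (M.G k) (M.G k)

/-- The interaction `Φ^{(k)}(ω)` between the configuration `ω` and a `k`-mark at the origin. -/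
noncomputable def PhiMark (M : Model d) (k : ℕ+) (ω : Config d) : ℝ≥0∞ :=
  ∑' (x : Site d) (l : ℕ+), (ω l x : ℝ≥0∞) * ENNReal.ofReal (T M 0 x (M.G k) (M.G l))

/-- `(P_a)_{a∈ℕ₀}` attains the infimum in the variational formula for `φ(m,ψ)`. -/
def IsMinFamily (M : Model d) (m : ℕ+ → ℝ≥0) (ψ : PMF ℕ) (P : ℕ → Measure (Config d)) : Prop :=
  phiAdmissible M m ψ P ∧ phiObjective M ψ P = phi M m ψ

/-- The relative entropy `H(m|q) = ∑_k (q_k − m_k + m_k log(m_k/q_k))` of sequences. -/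
noncomputable def Hseq (M : Model d) (m : ℕ+ → ℝ≥0) : ℝ≥0∞ :=
  ∑' k : ℕ+, ENNReal.ofReal
    ((M.q k : ℝ) - (m k : ℝ) + (m k : ℝ) * Real.log ((m k : ℝ) / (M.q k : ℝ)))

/-- The non-interacting free energy `χ^{(v=0)}(ρ,0) = inf {H(m|q) : ∑_k k·m_k = ρ}`. -/
noncomputable def chiV0 (M : Model d) (ρ : ℝ) : ℝ≥0∞ :=
  sInf { r | ∃ m : ℕ+ → ℝ≥0,
    (∑' k : ℕ+, ((k : ℕ) : ℝ≥0∞) * (m k : ℝ≥0∞)) = ENNReal.ofReal ρ ∧ r = Hseq M m }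

/-- The number of particles attached to points in `Λ`: `N_Λ^{(ℓ)}(ω)`. -/
noncomputable def NellIn (Λ : Finset (Site d)) (ω : Config d) : ℝ≥0∞ :=
  ∑ x ∈ Λ, ∑' k : ℕ+, ((k : ℕ) : ℝ≥0∞) * (ω k x : ℝ≥0∞)

/-- The internal energy `Φ_{Λ,Λ}(ω)` of the configuration in `Λ`. -/
noncomputable def PhiIn (M : Model d) (Λ : Finset (Site d)) (ω : Config d) : ℝ≥0∞ :=
  ∑ x ∈ Λ, ∑ y ∈ Λ, ∑' (k : ℕ+) (l : ℕ+),
    (ω k x : ℝ≥0∞) * (ω l y : ℝ≥0∞) * ENNReal.ofReal (T M x y (M.G k) (M.G l))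

/-- `M_{Λ,Λᶜ}(ω)`: the number of particles outside `Λ` attached to points in `Λ`. -/
noncomputable def MOut (M : Model d) (Λ : Finset (Site d)) (ω : Config d) : ℝ≥0∞ :=
  ∑ x ∈ Λ, ∑' k : ℕ+,
    (ω k x : ℝ≥0∞) * (((M.G k).filter fun i => x + i ∉ Λ).card : ℝ≥0∞)

/-- The partition function with zero Dirichlet boundary conditions:
`Z^{Dir}_{N,Λ} = E^{Dir}_Λ [e^{−Φ_{Λ,Λ}} 1{N_Λ^{(ℓ)} = N}]`, where `E^{Dir}_Λ` is the
expectation with respect to the reference process conditioned on `{M_{Λ,Λᶜ} = 0}`. -/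
noncomputable def ZDir (M : Model d) (N : ℕ) (Λ : Finset (Site d)) : ℝ≥0∞ :=
  ∫⁻ ω in { ω : Config d | NellIn Λ ω = (N : ℝ≥0∞) },
    expNeg (PhiIn M Λ ω) ∂(ProbabilityTheory.cond M.ref { ω : Config d | MOut M Λ ω = 0 })

/-!
Mix admissible families index by index: for `(P_a)` admissible for `(m, ψ)` and `(P'_a)`
admissible for `(m', ψ')`, put `Q_a = (λψ(a)/ψ_c(a)) P_a + ((1-λ)ψ'(a)/ψ_c(a)) P'_a`, where
`ψ_c = λψ + (1-λ)ψ'`. The constraints `∑_a ψ_c(a) Q_a(N₀^{(δ_k)}) = λm_k + (1-λ)m'_k` are linear in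
the family, so `(Q_a)` is admissible for the mixed data. Each summand of the objective is convex in `P_a`: the energy and
particle-number terms are linear, and the entropy density inherits convexity from the relative
entropy, whose summand `s - t + t log(t/s) = s·klFun(t/s)` is convex in `t`. Taking infima over
both families gives the claim.
-/

open InformationTheory (klFun klFun_apply convexOn_klFun klFun_nonneg)

lemma sub_add_mul_log_div_eq_mul_klFun {s : ℝ} (hs : s ≠ 0) (t : ℝ) :
    s - t + t * Real.log (t / s) = s * klFun (t / s) := by
  rw [klFun_apply]
  field_simp
  ring

lemma ofReal_sub_add_mul_log_div_convexComb_le {s t t' : ℝ} (hs : 0 < s) (ht : 0 ≤ t) (ht' : 0 ≤ t')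
    {a b : ℝ≥0∞} (hab : a + b = 1) :
    ENNReal.ofReal (s - (a.toReal * t + b.toReal * t')
        + (a.toReal * t + b.toReal * t') * Real.log ((a.toReal * t + b.toReal * t') / s))
      ≤ a * ENNReal.ofReal (s - t + t * Real.log (t / s))
        + b * ENNReal.ofReal (s - t' + t' * Real.log (t' / s)) := by
  obtain ⟨ha, hb⟩ := ENNReal.add_ne_top.1 (hab ▸ ENNReal.one_ne_top)
  simp only [sub_add_mul_log_div_eq_mul_klFun hs.ne']
  have hconv := convexOn_klFun.2 (Set.mem_Ici.2 (div_nonneg ht hs.le))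
    (Set.mem_Ici.2 (div_nonneg ht' hs.le)) ENNReal.toReal_nonneg ENNReal.toReal_nonneg
    (by rw [← ENNReal.toReal_add ha hb, hab, ENNReal.toReal_one])
  simp only [smul_eq_mul] at hconv
  have hk := klFun_nonneg (div_nonneg ht hs.le)
  have hk' := klFun_nonneg (div_nonneg ht' hs.le)
  calc ENNReal.ofReal (s * klFun ((a.toReal * t + b.toReal * t') / s))
      ≤ ENNReal.ofReal (a.toReal * (s * klFun (t / s)) + b.toReal * (s * klFun (t' / s))) := by
        refine ENNReal.ofReal_le_ofReal ?_
        rw [add_div, mul_div_assoc, mul_div_assoc]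
        linarith [mul_le_mul_of_nonneg_left hconv hs.le]
    _ = _ := by
        rw [ENNReal.ofReal_add (by positivity) (by positivity),
          ENNReal.ofReal_mul (ENNReal.toReal_nonneg (a := a)),
          ENNReal.ofReal_mul (ENNReal.toReal_nonneg (a := b)),
          ENNReal.ofReal_toReal ha, ENNReal.ofReal_toReal hb]

lemma Hrel_smul_add_smul_le {α : Type*} [MeasurableSpace α] {μ μ' ν : Measure α}
    [IsFiniteMeasure μ] [IsFiniteMeasure μ'] [IsFiniteMeasure ν] {a b : ℝ≥0∞} (hab : a + b = 1) :
    Hrel (a • μ + b • μ') ν ≤ a * Hrel μ ν + b * Hrel μ' ν := by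
  obtain ⟨ha, hb⟩ := ENNReal.add_ne_top.1 (hab ▸ ENNReal.one_ne_top)
  by_cases hμ : μ ≪ ν
  swap
  · obtain rfl | ha0 := eq_or_ne a 0
    · simp_all
    · simp [Hrel, hμ, ENNReal.mul_top ha0]
  by_cases hμ' : μ' ≪ ν
  swap
  · obtain rfl | hb0 := eq_or_ne b 0
    · simp_all
    · simp [Hrel, hμ', ENNReal.mul_top hb0]
  have hmix : a • μ + b • μ' ≪ ν := (hμ.smul_left a).add_left (hμ'.smul_left b)
  rw [Hrel, Hrel, Hrel, if_pos hmix, if_pos hμ, if_pos hμ', ← ENNReal.tsum_mul_left,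
    ← ENNReal.tsum_mul_left, ← ENNReal.tsum_add]
  refine ENNReal.tsum_le_tsum fun x => ?_
  obtain hν | hν := eq_or_ne (ν {x}) 0
  · simp [hν, hμ hν, hμ' hν, hmix hν]
  have hval : ((a • μ + b • μ') {x}).toReal
      = a.toReal * (μ {x}).toReal + b.toReal * (μ' {x}).toReal := by
    simp [ENNReal.toReal_add, ENNReal.mul_ne_top, ha, hb, measure_ne_top]
  rw [hval]
  exact ofReal_sub_add_mul_log_div_convexComb_le (ENNReal.toReal_pos hν (measure_ne_top ν _))
    ENNReal.toReal_nonneg ENNReal.toReal_nonneg hab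

-- Mathlib's `ENNReal.limsup_add_le` asks for a `CountableInterFilter`, which `atTop` is not.
lemma _root_.ENNReal.limsup_add_le' {ι : Type*} {f : Filter ι} (u v : ι → ℝ≥0∞) :
    limsup (u + v) f ≤ limsup u f + limsup v f := by
  refine le_of_forall_gt fun c hc => ?_
  obtain ⟨a, ha, b, hb, habc⟩ := ENNReal.exists_add_lt_of_add_lt hc
  refine (limsup_le_of_le (by isBoundedDefault) ?_).trans_lt habc
  filter_upwards [eventually_lt_of_limsup_lt ha, eventually_lt_of_limsup_lt hb] with n hun hvn
  exact add_le_add hun.le hvn.le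

lemma measurable_restrict (Λ : Finset (Site d)) : Measurable (restrict Λ) := by
  unfold restrict
  fun_prop

lemma measurable_shift (z : Site d) : Measurable (shift z : Config d → Config d) := by
  unfold shift
  fun_prop

lemma entDens_smul_add_smul_le {ν P P' : Measure (Config d)}
    [IsFiniteMeasure ν] [IsFiniteMeasure P] [IsFiniteMeasure P'] {a b : ℝ≥0∞} (hab : a + b = 1) :
    entDens ν (a • P + b • P') ≤ a * entDens ν P + b * entDens ν P' := by
  obtain ⟨ha, hb⟩ := ENNReal.add_ne_top.1 (hab ▸ ENNReal.one_ne_top)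
  rw [entDens, entDens, entDens, ← ENNReal.limsup_const_mul_of_ne_top ha,
    ← ENNReal.limsup_const_mul_of_ne_top hb]
  refine (limsup_le_limsup (.of_forall fun n => ?_)).trans (ENNReal.limsup_add_le' _ _)
  simp only [Pi.add_apply]
  rw [Measure.map_add _ _ (measurable_restrict _), Measure.map_smul, Measure.map_smul,
    ← mul_div_assoc, ← mul_div_assoc, ← ENNReal.add_div]
  gcongr
  exact Hrel_smul_add_smul_le hab

lemma IsShiftInvariantProb.smul_add_smul {P P' : Measure (Config d)}
    (hP : IsShiftInvariantProb P) (hP' : IsShiftInvariantProb P') {a b : ℝ≥0∞} (hab : a + b = 1) :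
    IsShiftInvariantProb (a • P + b • P') := by
  have := hP.1
  have := hP'.1
  refine ⟨⟨by simpa using hab⟩, fun z => ?_⟩
  rw [Measure.map_add _ _ (measurable_shift z), Measure.map_smul, Measure.map_smul, hP.2 z, hP'.2 z]

section Mixture

variable {Ω : Type*} [MeasurableSpace Ω]

-- If both weights vanish the value is irrelevant; `P` keeps the family admissible.
noncomputable def mixMeasure (a b : ℝ≥0∞) (P P' : Measure Ω) : Measure Ω :=
  if a + b = 0 then P else (a / (a + b)) • P + (b / (a + b)) • P'

variable {a b : ℝ≥0∞} {P P' : Measure Ω}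

lemma div_add_div_add_eq_one (h0 : a + b ≠ 0) (htop : a + b ≠ ⊤) :
    a / (a + b) + b / (a + b) = 1 := by
  rw [ENNReal.div_add_div_same, ENNReal.div_self h0 htop]

lemma add_mul_mixMeasure_le {F : Measure Ω → ℝ≥0∞}
    (hF : ∀ s t, s + t = 1 → F (s • P + t • P') ≤ s * F P + t * F P') (htop : a + b ≠ ⊤) :
    (a + b) * F (mixMeasure a b P P') ≤ a * F P + b * F P' := by
  unfold mixMeasure
  split_ifs with h0
  · obtain ⟨rfl, rfl⟩ := add_eq_zero.1 h0
    simp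
  · calc _ ≤ (a + b) * (a / (a + b) * F P + b / (a + b) * F P') := by
          gcongr
          exact hF _ _ (div_add_div_add_eq_one h0 htop)
      _ = _ := by
          rw [mul_add, ← mul_assoc, ← mul_assoc, ENNReal.mul_div_cancel h0 htop,
            ENNReal.mul_div_cancel h0 htop]

lemma add_mul_lintegral_mixMeasure (f : Ω → ℝ≥0∞) (htop : a + b ≠ ⊤) :
    (a + b) * ∫⁻ x, f x ∂(mixMeasure a b P P') = a * ∫⁻ x, f x ∂P + b * ∫⁻ x, f x ∂P' := by
  unfold mixMeasure
  split_ifs with h0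
  · obtain ⟨rfl, rfl⟩ := add_eq_zero.1 h0
    simp
  · rw [lintegral_add_measure, lintegral_smul_measure, lintegral_smul_measure, smul_eq_mul,
      smul_eq_mul, mul_add, ← mul_assoc, ← mul_assoc, ENNReal.mul_div_cancel h0 htop,
      ENNReal.mul_div_cancel h0 htop]

end Mixture

lemma isShiftInvariantProb_mixMeasure {a b : ℝ≥0∞} {P P' : Measure (Config d)}
    (hP : IsShiftInvariantProb P) (hP' : IsShiftInvariantProb P') (htop : a + b ≠ ⊤) :
    IsShiftInvariantProb (mixMeasure a b P P') := by
  unfold mixMeasure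
  split_ifs with h0
  · exact hP
  · exact hP.smul_add_smul hP' (div_add_div_add_eq_one h0 htop)

noncomputable def phiCost (M : Model d) (a : ℕ) (P : Measure (Config d)) : ℝ≥0∞ :=
  entDens M.ref P + (∫⁻ ω, PhiZero M ω ∂P) + 2 * vbar M * (a : ℝ≥0∞) * (∫⁻ ω, Nell ω ∂P)
    + vbar M * (a : ℝ≥0∞) ^ 2

lemma phiObjective_eq_tsum_phiCost (M : Model d) (ψ : PMF ℕ) (P : ℕ → Measure (Config d)) :
    phiObjective M ψ P = ∑' a, ψ a * phiCost M a (P a) := rfl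

lemma phiCost_smul_add_smul_le (M : Model d) (n : ℕ) {P P' : Measure (Config d)}
    [IsFiniteMeasure P] [IsFiniteMeasure P'] {a b : ℝ≥0∞} (hab : a + b = 1) :
    phiCost M n (a • P + b • P') ≤ a * phiCost M n P + b * phiCost M n P' := by
  have := M.href.1
  have hconst : vbar M * (n : ℝ≥0∞) ^ 2 = (a + b) * (vbar M * (n : ℝ≥0∞) ^ 2) := by
    rw [hab, one_mul]
  calc phiCost M n (a • P + b • P')
      ≤ (a * entDens M.ref P + b * entDens M.ref P')
        + (a * ∫⁻ ω, PhiZero M ω ∂P + b * ∫⁻ ω, PhiZero M ω ∂P')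
        + 2 * vbar M * n * (a * ∫⁻ ω, Nell ω ∂P + b * ∫⁻ ω, Nell ω ∂P')
        + (a + b) * (vbar M * (n : ℝ≥0∞) ^ 2) := by
        rw [phiCost, lintegral_add_measure, lintegral_add_measure, lintegral_smul_measure,
          lintegral_smul_measure, lintegral_smul_measure, lintegral_smul_measure, smul_eq_mul,
          smul_eq_mul, smul_eq_mul, smul_eq_mul, ← hconst]
        gcongr
        exact entDens_smul_add_smul_le hab
    _ = a * phiCost M n P + b * phiCost M n P' := by rw [phiCost, phiCost]; ring

lemma phiAdmissible_mixMeasure (M : Model d) {m m' : ℕ+ → ℝ≥0} {ψ ψ' ψc : PMF ℕ} {L L' : ℝ≥0}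
    (hψc : ∀ a : ℕ, ψc a = L * ψ a + L' * ψ' a)
    {P P' : ℕ → Measure (Config d)} (hP : phiAdmissible M m ψ P) (hP' : phiAdmissible M m' ψ' P') :
    phiAdmissible M (fun k => L * m k + L' * m' k) ψc
      (fun a => mixMeasure (L * ψ a) (L' * ψ' a) (P a) (P' a)) := by
  have htop (a : ℕ) : L * ψ a + L' * ψ' a ≠ ⊤ := hψc a ▸ PMF.apply_ne_top ψc a
  refine ⟨fun a => isShiftInvariantProb_mixMeasure (hP.1 a) (hP'.1 a) (htop a), fun k => ?_⟩
  calc ∑' a, ψc a * ∫⁻ ω, Ndelta k ω ∂(mixMeasure _ _ (P a) (P' a))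
      = ∑' a, (L * (ψ a * ∫⁻ ω, Ndelta k ω ∂(P a)) + L' * (ψ' a * ∫⁻ ω, Ndelta k ω ∂(P' a))) := by
        simp only [hψc, add_mul_lintegral_mixMeasure _ (htop _), mul_assoc]
    _ = _ := by
        simp only [ENNReal.tsum_add, ENNReal.tsum_mul_left, hP.2 k, hP'.2 k]
        push_cast
        rfl

lemma phi_le_phiObjective {M : Model d} {m : ℕ+ → ℝ≥0} {ψ : PMF ℕ} {P : ℕ → Measure (Config d)}
    (hP : phiAdmissible M m ψ P) : phi M m ψ ≤ phiObjective M ψ P :=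
  sInf_le ⟨P, hP, rfl⟩

lemma phi_mix_le_mix_phiObjective (M : Model d) {m m' : ℕ+ → ℝ≥0}
    {ψ ψ' ψc : PMF ℕ} {L L' : ℝ≥0} (hψc : ∀ a : ℕ, ψc a = L * ψ a + L' * ψ' a)
    {P P' : ℕ → Measure (Config d)} (hP : phiAdmissible M m ψ P) (hP' : phiAdmissible M m' ψ' P') :
    phi M (fun k => L * m k + L' * m' k) ψc
      ≤ L * phiObjective M ψ P + L' * phiObjective M ψ' P' := by
  have htop (a : ℕ) : L * ψ a + L' * ψ' a ≠ ⊤ := hψc a ▸ PMF.apply_ne_top ψc a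
  refine (phi_le_phiObjective (phiAdmissible_mixMeasure M hψc hP hP')).trans ?_
  simp only [phiObjective_eq_tsum_phiCost, ← ENNReal.tsum_mul_left, ← ENNReal.tsum_add, hψc]
  refine ENNReal.tsum_le_tsum fun a =>
    (add_mul_mixMeasure_le (fun b b' hbb' => ?_) (htop a)).trans_eq ?_
  · have := (hP.1 a).1
    have := (hP'.1 a).1
    exact phiCost_smul_add_smul_le M a hbb'
  · ring

lemma le_mul_sInf_add_mul_sInf {c L L' : ℝ≥0∞} {S S' : Set ℝ≥0∞} (hL : L ≠ 0) (hL' : L' ≠ 0)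
    (hLtop : L ≠ ⊤) (hL'top : L' ≠ ⊤) (h : ∀ x ∈ S, ∀ y ∈ S', c ≤ L * x + L' * y) :
    c ≤ L * sInf S + L' * sInf S' := by
  simp only [sInf_eq_iInf, ENNReal.mul_iInf_of_ne hL hLtop, ENNReal.mul_iInf_of_ne hL' hL'top,
    ENNReal.iInf_add, ENNReal.add_iInf]
  exact le_iInf₂ fun y hy => le_iInf₂ fun x hx => h x hx y hy

theorem phi_convex_general {d : ℕ} (M : Model d)
    (m m' : ℕ+ → ℝ≥0) (ψ ψ' ψc : PMF ℕ) (lam : ℝ≥0) (hlam : lam ≤ 1)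
    (hψc : ∀ a : ℕ, ψc a = (lam : ℝ≥0∞) * ψ a + ((1 - lam : ℝ≥0) : ℝ≥0∞) * ψ' a) :
    phi M (fun k => lam * m k + (1 - lam) * m' k) ψc
      ≤ (lam : ℝ≥0∞) * phi M m ψ + ((1 - lam : ℝ≥0) : ℝ≥0∞) * phi M m' ψ' := by
  obtain rfl | hlam0 := eq_or_ne lam 0
  · obtain rfl : ψc = ψ' := PMF.ext fun a => by simpa using hψc a
    simp
  obtain rfl | hlam1 := eq_or_ne lam 1
  · obtain rfl : ψc = ψ := PMF.ext fun a => by simpa using hψc a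
    simp
  refine le_mul_sInf_add_mul_sInf (ENNReal.coe_ne_zero.2 hlam0)
    (ENNReal.coe_ne_zero.2 (tsub_pos_of_lt (hlam.lt_of_ne hlam1)).ne') ENNReal.coe_ne_top
    ENNReal.coe_ne_top ?_
  rintro _ ⟨P, hP, rfl⟩ _ ⟨P', hP', rfl⟩
  exact phi_mix_le_mix_phiObjective M hψc hP hP'

/-- Lemma: `φ` is jointly convex in `(m,ψ)`.
For all `m, m' ∈ [0,∞)^ℕ`, all probability measures `ψ, ψ'` on `ℕ₀` and all `λ ∈ [0,1]`,
`φ(λm+(1−λ)m', λψ+(1−λ)ψ') ≤ λ·φ(m,ψ) + (1−λ)·φ(m',ψ')`. -/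
theorem phi_convex {d : ℕ} (hd : 0 < d) (M : Model d)
    (m m' : ℕ+ → ℝ≥0) (ψ ψ' ψc : PMF ℕ) (lam : ℝ≥0) (hlam : lam ≤ 1)
    (hψc : ∀ a : ℕ, ψc a = (lam : ℝ≥0∞) * ψ a + ((1 - lam : ℝ≥0) : ℝ≥0∞) * ψ' a) :
    phi M (fun k => lam * m k + (1 - lam) * m' k) ψc
      ≤ (lam : ℝ≥0∞) * phi M m ψ + ((1 - lam : ℝ≥0) : ℝ≥0∞) * phi M m' ψ' :=
  phi_convex_general M m m' ψ ψ' ψc lam hlam hψc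

end BoxBose
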